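/- arXiv:1107.5102 — 8 statements merged into one kernel-verified Lean document; each statement's English description precedes it below -/
import Mathlib

section
/- Let β ≥ 1, h, w > 0, and let t be a Lebesgue-measurable subset of [0,w]×[0,h] of positive area that is downward closed in the sense that whenever (x,y) ∈ t, the rectangle [0,x]×[0,y] is contained in t. If every axis-aligned rectangle contained in t has area less than area(t)/β, then area(t) ≤ (β/e^{β−1}) · h·w. -/
/-!
Let `B = area(t) / β`. For every point `(x, y)` of `t` the rectangle `[0,x] × [0,y]` lies in `t`,
so `x * y < B`: the staircase lies under the hyperbola `x y = B`. Integrating the vertical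
slices, `min h (B / x)`, over `[0, w]` bounds the area by `B (1 + log (h w / B))`, i.e.
`β ≤ 1 + log (β h w / area(t))`, which rearranges to the claim.
-/

open MeasureTheory Set

def underHyperbola (w h B : ℝ) : Set (ℝ × ℝ) :=
  {p | p ∈ Icc 0 w ×ˢ Icc 0 h ∧ p.1 * p.2 ≤ B}

lemma measurableSet_underHyperbola (w h B : ℝ) : MeasurableSet (underHyperbola w h B) :=
  (measurableSet_Icc.prod measurableSet_Icc).inter
    (measurableSet_le (measurable_fst.mul measurable_snd) measurable_const)

lemma lintegral_Ioc_ofReal_div {a b c : ℝ} (ha : 0 < a) (hab : a ≤ b) (hc : 0 ≤ c) :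
    ∫⁻ x in Ioc a b, ENNReal.ofReal (c / x) = ENNReal.ofReal (c * Real.log (b / a)) := by
  have hint : IntegrableOn (fun x : ℝ => c / x) (Ioc a b) :=
    ((continuousOn_const.div continuousOn_id fun x hx => (ha.trans_le hx.1).ne').integrableOn_Icc
      ).mono_set Ioc_subset_Icc_self
  rw [← ofReal_integral_eq_lintegral_ofReal hint, ← intervalIntegral.integral_of_le hab]
  · simp only [div_eq_mul_inv c, intervalIntegral.integral_const_mul]
    rw [integral_inv fun h0 => (uIcc_of_le hab ▸ h0).1.not_gt ha]
  · filter_upwards [ae_restrict_mem measurableSet_Ioc] with x hx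
    exact div_nonneg hc (ha.trans hx.1).le

section underHyperbola

variable {w h B : ℝ}

lemma volume_slice_underHyperbola_le (hh : 0 < h) (hB : 0 ≤ B) (x : ℝ) :
    volume (Prod.mk x ⁻¹' underHyperbola w h B) ≤
      (Icc 0 (B / h)).indicator (fun _ => ENNReal.ofReal h) x +
        (Ioc (B / h) w).indicator (fun x => ENNReal.ofReal (B / x)) x := by
  by_cases hx₁ : x ∈ Icc 0 (B / h)
  · have hslice : Prod.mk x ⁻¹' underHyperbola w h B ⊆ Icc 0 h := fun y hy => hy.1.2
    calc volume (Prod.mk x ⁻¹' underHyperbola w h B) ≤ volume (Icc 0 h) := measure_mono hslice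
      _ = _ := by rw [Real.volume_Icc, sub_zero, indicator_of_mem hx₁]
      _ ≤ _ := le_self_add
  by_cases hx₂ : x ∈ Ioc (B / h) w
  · have hx : 0 < x := (div_nonneg hB hh.le).trans_lt hx₂.1
    have hslice : Prod.mk x ⁻¹' underHyperbola w h B ⊆ Icc 0 (B / x) := fun y hy =>
      ⟨hy.1.2.1, (le_div_iff₀' hx).2 hy.2⟩
    calc volume (Prod.mk x ⁻¹' underHyperbola w h B) ≤ volume (Icc 0 (B / x)) :=
          measure_mono hslice
      _ = _ := by rw [Real.volume_Icc, sub_zero, indicator_of_mem hx₂]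
      _ ≤ _ := le_add_self
  have hx : x ∉ Icc 0 w := fun hx => if hxB : x ≤ B / h then hx₁ ⟨hx.1, hxB⟩
    else hx₂ ⟨not_le.1 hxB, hx.2⟩
  have hslice : Prod.mk x ⁻¹' underHyperbola w h B = ∅ :=
    eq_empty_of_forall_notMem fun y hy => hx hy.1.1
  simp [hslice]

lemma volume_underHyperbola_le (hh : 0 < h) (hB : 0 < B) (hBhw : B ≤ h * w) :
    volume (underHyperbola w h B) ≤ ENNReal.ofReal (B * (1 + Real.log (h * w / B))) := by
  have hBw : B / h ≤ w := (div_le_iff₀' hh).2 hBhw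
  calc volume (underHyperbola w h B)
      = ∫⁻ x, volume (Prod.mk x ⁻¹' underHyperbola w h B) := by
        rw [Measure.volume_eq_prod, Measure.prod_apply (measurableSet_underHyperbola w h B)]
    _ ≤ ∫⁻ x, ((Icc 0 (B / h)).indicator (fun _ => ENNReal.ofReal h) x +
          (Ioc (B / h) w).indicator (fun x => ENNReal.ofReal (B / x)) x) :=
        lintegral_mono (volume_slice_underHyperbola_le hh hB.le)
    _ = ENNReal.ofReal (h * (B / h)) + ENNReal.ofReal (B * Real.log (w / (B / h))) := by
        rw [lintegral_add_left (measurable_const.indicator measurableSet_Icc),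
          lintegral_indicator_const measurableSet_Icc, Real.volume_Icc, sub_zero,
          ← ENNReal.ofReal_mul hh.le, lintegral_indicator measurableSet_Ioc,
          lintegral_Ioc_ofReal_div (div_pos hB hh) hBw hB.le]
    _ = ENNReal.ofReal (B * (1 + Real.log (h * w / B))) := by
        rw [← ENNReal.ofReal_add (by positivity)
          (mul_nonneg hB.le (Real.log_nonneg ((one_le_div (div_pos hB hh)).2 hBw)))]
        congr 1
        field_simp

end underHyperbola

lemma subset_underHyperbola_of_forall_rect_area_lt {w h M : ℝ} {t : Set (ℝ × ℝ)}
    (hsub : t ⊆ Icc 0 w ×ˢ Icc 0 h) (hdc : ∀ p ∈ t, Icc 0 p.1 ×ˢ Icc 0 p.2 ⊆ t)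
    (hrect : ∀ a b c d : ℝ, a ≤ b → c ≤ d → Icc a b ×ˢ Icc c d ⊆ t → (b - a) * (d - c) < M) :
    t ⊆ underHyperbola w h M := fun p hp =>
  ⟨hsub hp, by simpa using (hrect 0 p.1 0 p.2 (hsub hp).1.1 (hsub hp).2.1 (hdc p hp)).le⟩

lemma le_div_exp_mul_of_le_mul_one_add_log {A β C : ℝ} (hA : 0 < A) (hβ : 0 < β) (hC : 0 < C)
    (hle : A ≤ A / β * (1 + Real.log (C / (A / β)))) :
    A ≤ β / Real.exp (β - 1) * C := by
  have hlog : β - 1 ≤ Real.log (β * C / A) := by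
    rw [div_mul_eq_mul_div, le_div_iff₀ hβ, show C / (A / β) = β * C / A by field_simp] at hle
    linarith [le_of_mul_le_mul_left hle hA]
  have hexp : Real.exp (β - 1) ≤ β * C / A := by
    simpa [Real.exp_log (by positivity : 0 < β * C / A)] using Real.exp_le_exp.2 hlog
  rw [div_mul_eq_mul_div, le_div_iff₀ (Real.exp_pos _)]
  rw [le_div_iff₀ hA] at hexp
  linarith

theorem stmt4_general (β h w : ℝ) (hβ : 1 ≤ β) (hh : 0 < h) (hw : 0 < w)
    (t : Set (ℝ × ℝ))
    (hsub : t ⊆ Set.Icc (0:ℝ) w ×ˢ Set.Icc (0:ℝ) h)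
    (hpos : 0 < (volume t).toReal)
    (hdc : ∀ p ∈ t, Set.Icc (0:ℝ) p.1 ×ˢ Set.Icc (0:ℝ) p.2 ⊆ t)
    (hrect : ∀ a b c d : ℝ, a ≤ b → c ≤ d →
      Set.Icc a b ×ˢ Set.Icc c d ⊆ t → (b - a) * (d - c) < (volume t).toReal / β) :
    (volume t).toReal ≤ β / Real.exp (β - 1) * (h * w) := by
  set A := (volume t).toReal
  have hβ₀ : 0 < β := one_pos.trans_le hβ
  have hA_le : A ≤ h * w := by
    refine ENNReal.toReal_le_of_le_ofReal (by positivity) ((measure_mono hsub).trans_eq ?_)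
    rw [Measure.volume_eq_prod, Measure.prod_prod, Real.volume_Icc, Real.volume_Icc, sub_zero,
      sub_zero, ← ENNReal.ofReal_mul hw.le, mul_comm]
  have hB : 0 < A / β := div_pos hpos hβ₀
  have hB_le : A / β ≤ h * w := (div_le_self hpos.le hβ).trans hA_le
  have hlog : 0 ≤ Real.log (h * w / (A / β)) := Real.log_nonneg ((one_le_div hB).2 hB_le)
  have hA_bound : A ≤ A / β * (1 + Real.log (h * w / (A / β))) :=
    ENNReal.toReal_le_of_le_ofReal (by positivity)
      ((measure_mono (subset_underHyperbola_of_forall_rect_area_lt hsub hdc hrect)).trans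
        (volume_underHyperbola_le hh hB hB_le))
  exact le_div_exp_mul_of_le_mul_one_add_log hpos hβ₀ (by positivity) hA_bound

theorem stmt4 (β h w : ℝ) (hβ : 1 ≤ β) (hh : 0 < h) (hw : 0 < w)
    (t : Set (ℝ × ℝ)) (hmeas : MeasurableSet t)
    (hsub : t ⊆ Set.Icc (0:ℝ) w ×ˢ Set.Icc (0:ℝ) h)
    (hpos : 0 < (volume t).toReal)
    (hdc : ∀ p ∈ t, Set.Icc (0:ℝ) p.1 ×ˢ Set.Icc (0:ℝ) p.2 ⊆ t)
    (hrect : ∀ a b c d : ℝ, a ≤ b → c ≤ d →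
      Set.Icc a b ×ˢ Set.Icc c d ⊆ t → (b - a) * (d - c) < (volume t).toReal / β) :
    (volume t).toReal ≤ β / Real.exp (β - 1) * (h * w) :=
  stmt4_general β h w hβ hh hw t hsub hpos hdc hrect
end

section
/- For every β ≥ 1, every h, w > 0, and every ε > 0, there exists a set t ⊆ [0,w]×[0,h] that is a finite union of axis-aligned rectangles, is downward closed (whenever (x,y) ∈ t, the rectangle [0,x]×[0,y] is contained in t), has positive area, such that every axis-aligned rectangle contained in t has area less than area(t)/β, and area(t) > (β/e^{β−1})·h·w − ε. -/
/-!
Take the corners `(w q^(m-i), h q^i)`, `i = 0, …, m`, all on the hyperbola `x y = w h q^m`, and let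
`t` be the union of the rectangles `[0, w q^(m-i)] × [0, h q^i]`. A rectangle inside `t` has its
upper right corner under one of these corners, so its area is at most `w h q^m`, while the area of
`t` is `w h q^m (1 + m (1 - q))`. For `q = 1 - c/m` the ratio of the two is `1 + c` and the area is
`w h (1 - c/m)^m (1 + c) → w h e^(-c) (1 + c)`; taking `c` slightly above `β - 1` makes the ratio
exceed `β` and the area approach `β e^(1-β) h w`.
-/

open MeasureTheory Set Filter Topology

def staircase (n : ℕ) (x y : ℕ → ℝ) : Set (ℝ × ℝ) :=
  ⋃ i : Fin (n + 1), Icc 0 (x i) ×ˢ Icc 0 (y i)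

section Staircase

variable {n : ℕ} {x y : ℕ → ℝ}

lemma staircase_zero : staircase 0 x y = Icc 0 (x 0) ×ˢ Icc 0 (y 0) := by
  ext p
  simp [staircase]

lemma staircase_succ :
    staircase (n + 1) x y = staircase n x y ∪ Icc 0 (x (n + 1)) ×ˢ Icc 0 (y (n + 1)) := by
  ext p
  simp only [staircase, mem_union, mem_iUnion, Fin.exists_fin_succ', Fin.val_castSucc,
    Fin.val_last]

lemma staircase_subset_Icc_prod_Icc {w h : ℝ} (hx : ∀ i, x i ≤ w) (hy : ∀ i, y i ≤ h) :
    staircase n x y ⊆ Icc 0 w ×ˢ Icc 0 h := by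
  rintro p ⟨_, ⟨i, rfl⟩, ⟨⟨hp1, hp1'⟩, ⟨hp2, hp2'⟩⟩⟩
  exact ⟨⟨hp1, hp1'.trans (hx i)⟩, ⟨hp2, hp2'.trans (hy i)⟩⟩

lemma Icc_prod_Icc_subset_staircase {p : ℝ × ℝ} (hp : p ∈ staircase n x y) :
    Icc 0 p.1 ×ˢ Icc 0 p.2 ⊆ staircase n x y := by
  obtain ⟨i, hi⟩ := mem_iUnion.1 hp
  exact (prod_mono (Icc_subset_Icc_right hi.1.2) (Icc_subset_Icc_right hi.2.2)).trans
    (subset_iUnion_of_subset i le_rfl)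

lemma area_le_of_Icc_prod_Icc_subset_staircase {K a b c d : ℝ} (hK : ∀ i ≤ n, x i * y i ≤ K)
    (hab : a ≤ b) (hcd : c ≤ d) (hsub : Icc a b ×ˢ Icc c d ⊆ staircase n x y) :
    (b - a) * (d - c) ≤ K := by
  obtain ⟨i, ⟨ha, -⟩, ⟨hc, -⟩⟩ :=
    mem_iUnion.1 (hsub (mk_mem_prod (left_mem_Icc.2 hab) (left_mem_Icc.2 hcd)))
  obtain ⟨j, ⟨-, hb⟩, ⟨-, hd⟩⟩ :=
    mem_iUnion.1 (hsub (mk_mem_prod (right_mem_Icc.2 hab) (right_mem_Icc.2 hcd)))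
  calc (b - a) * (d - c) ≤ b * d := by nlinarith
    _ ≤ x j * y j := by nlinarith
    _ ≤ K := hK j (Nat.lt_succ_iff.1 j.isLt)

lemma isCompact_staircase : IsCompact (staircase n x y) :=
  isCompact_iUnion fun _ => isCompact_Icc.prod isCompact_Icc

end Staircase

lemma volume_add_le_volume_union_Icc_prod_Icc {T : Set (ℝ × ℝ)} {a b c : ℝ} (ha : 0 ≤ a)
    (hc : 0 ≤ c) (hT : ∀ p ∈ T, p.1 ≤ a) :
    volume T + ENNReal.ofReal ((b - a) * c) ≤ volume (T ∪ Icc 0 b ×ˢ Icc 0 c) := by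
  have hdisj : Disjoint T (Ioc a b ×ˢ Icc 0 c) :=
    disjoint_left.2 fun p hp hp' => (hT p hp).not_gt hp'.1.1
  have hstrip : volume (Ioc a b ×ˢ Icc 0 c) = ENNReal.ofReal ((b - a) * c) := by
    rw [Measure.volume_eq_prod, Measure.prod_prod, Real.volume_Ioc, Real.volume_Icc, sub_zero,
      ENNReal.ofReal_mul' hc]
  calc volume T + ENNReal.ofReal ((b - a) * c) = volume (T ∪ Ioc a b ×ˢ Icc 0 c) := by
        rw [measure_union hdisj (measurableSet_Ioc.prod measurableSet_Icc), hstrip]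
    _ ≤ volume (T ∪ Icc 0 b ×ˢ Icc 0 c) :=
        measure_mono (union_subset_union_right T (prod_mono (Ioc_subset_Icc_self.trans
          (Icc_subset_Icc_left ha)) le_rfl))

lemma ofReal_le_volume_staircase {x y : ℕ → ℝ} (hx : Monotone x) (hx0 : 0 ≤ x 0)
    (hy : ∀ i, 0 ≤ y i) (n : ℕ) :
    ENNReal.ofReal (x 0 * y 0 + ∑ i ∈ Finset.range n, (x (i + 1) - x i) * y (i + 1)) ≤
      volume (staircase n x y) := by
  induction n with
  | zero =>
    rw [staircase_zero, Measure.volume_eq_prod, Measure.prod_prod, Real.volume_Icc,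
      Real.volume_Icc, sub_zero, sub_zero, Finset.sum_range_zero, add_zero, ENNReal.ofReal_mul hx0]
  | succ n ih =>
    have hT : ∀ p ∈ staircase n x y, p.1 ≤ x n := fun p hp => by
      obtain ⟨i, hi⟩ := mem_iUnion.1 hp
      exact hi.1.2.trans (hx (Nat.lt_succ_iff.1 i.isLt))
    rw [Finset.sum_range_succ, ← add_assoc, staircase_succ]
    calc _ ≤ ENNReal.ofReal (x 0 * y 0 + ∑ i ∈ Finset.range n, (x (i + 1) - x i) * y (i + 1))
          + ENNReal.ofReal ((x (n + 1) - x n) * y (n + 1)) := ENNReal.ofReal_add_le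
      _ ≤ volume (staircase n x y) + ENNReal.ofReal ((x (n + 1) - x n) * y (n + 1)) := by gcongr
      _ ≤ _ := volume_add_le_volume_union_Icc_prod_Icc (hx0.trans (hx (Nat.zero_le n))) (hy _) hT

lemma le_toReal_volume_staircase {x y : ℕ → ℝ} (hx : Monotone x) (hx0 : 0 ≤ x 0)
    (hy : ∀ i, 0 ≤ y i) (n : ℕ) :
    x 0 * y 0 + ∑ i ∈ Finset.range n, (x (i + 1) - x i) * y (i + 1) ≤
      (volume (staircase n x y)).toReal :=
  (ENNReal.ofReal_le_iff_le_toReal isCompact_staircase.measure_lt_top.ne).1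
    (ofReal_le_volume_staircase hx hx0 hy n)

lemma geometric_staircase_sum (w h q : ℝ) (m : ℕ) :
    w * q ^ m * (h * q ^ 0) + ∑ i ∈ Finset.range m,
      (w * q ^ (m - (i + 1)) - w * q ^ (m - i)) * (h * q ^ (i + 1)) =
      w * h * q ^ m * (1 + m * (1 - q)) := by
  have hterm : ∀ i ∈ Finset.range m,
      (w * q ^ (m - (i + 1)) - w * q ^ (m - i)) * (h * q ^ (i + 1)) = w * h * q ^ m * (1 - q) := by
    intro i hi
    obtain ⟨k, rfl⟩ : ∃ k, m = k + (i + 1) := ⟨m - (i + 1), by simp at hi; omega⟩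
    rw [show k + (i + 1) - (i + 1) = k by omega, show k + (i + 1) - i = k + 1 by omega]
    ring
  rw [Finset.sum_congr rfl hterm, Finset.sum_const, Finset.card_range, nsmul_eq_mul]
  ring

lemma exists_lt_one_sub_div_pow_mul (a δ : ℝ) (hδ : 0 < δ) :
    ∃ c > a, ∃ m : ℕ, c < m ∧ (1 + a) * Real.exp (-a) - δ < (1 - c / m) ^ m * (1 + c) := by
  have hg : ContinuousAt (fun c => Real.exp (-c) * (1 + c)) a := by fun_prop
  obtain ⟨c, hcδ, hca⟩ := (((hg.eventually (lt_mem_nhds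
    (show (1 + a) * Real.exp (-a) - δ < Real.exp (-a) * (1 + a) by linarith))).filter_mono
    nhdsWithin_le_nhds).and self_mem_nhdsWithin).exists (f := 𝓝[>] a)
  have hlim : Tendsto (fun m : ℕ => (1 - c / m) ^ m * (1 + c)) atTop
      (𝓝 (Real.exp (-c) * (1 + c))) := by
    simpa [← sub_eq_add_neg, neg_div] using
      (Real.tendsto_one_add_div_pow_exp (-c)).mul_const (1 + c)
  obtain ⟨m, hm, hcm⟩ := ((hlim.eventually (lt_mem_nhds hcδ)).and
    (tendsto_natCast_atTop_atTop.eventually_gt_atTop c)).exists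
  exact ⟨c, hca, m, hcm, hm⟩

theorem stmt5 (β h w ε : ℝ) (hβ : 1 ≤ β) (hh : 0 < h) (hw : 0 < w) (hε : 0 < ε) :
    ∃ (m : ℕ) (a b c d : Fin m → ℝ) (t : Set (ℝ × ℝ)),
      t = (⋃ i, Set.Icc (a i) (b i) ×ˢ Set.Icc (c i) (d i)) ∧
      (∀ i, a i ≤ b i ∧ c i ≤ d i) ∧
      t ⊆ Set.Icc (0:ℝ) w ×ˢ Set.Icc (0:ℝ) h ∧
      (∀ p ∈ t, Set.Icc (0:ℝ) p.1 ×ˢ Set.Icc (0:ℝ) p.2 ⊆ t) ∧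
      0 < (volume t).toReal ∧
      (∀ a' b' c' d' : ℝ, a' ≤ b' → c' ≤ d' →
        Set.Icc a' b' ×ˢ Set.Icc c' d' ⊆ t →
        (b' - a') * (d' - c') < (volume t).toReal / β) ∧
      β / Real.exp (β - 1) * (h * w) - ε < (volume t).toReal := by
  obtain ⟨c, hc, m, hcm, happrox⟩ :=
    exists_lt_one_sub_div_pow_mul (β - 1) (ε / (h * w)) (by positivity)
  have hm : (0 : ℝ) < m := by linarith
  have hc0 : 0 ≤ c := by linarith
  set q := 1 - c / m with hq
  have hq0 : 0 < q := by rw [sub_pos, div_lt_one hm]; exact hcm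
  have hq1 : q ≤ 1 := sub_le_self 1 (by positivity)
  have hmq : (m : ℝ) * (1 - q) = c := by rw [hq]; field_simp; ring
  set x : ℕ → ℝ := fun i => w * q ^ (m - i)
  set y : ℕ → ℝ := fun i => h * q ^ i
  have hx : Monotone x := fun i j hij =>
    mul_le_mul_of_nonneg_left (pow_le_pow_of_le_one hq0.le hq1 (by omega)) hw.le
  have hvol : w * h * q ^ m * (1 + c) ≤ (volume (staircase m x y)).toReal := by
    rw [← hmq, ← geometric_staircase_sum]
    exact le_toReal_volume_staircase hx (by positivity)
      (fun i => mul_nonneg hh.le (pow_nonneg hq0.le i)) m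
  have hK : 0 < w * h * q ^ m := by have := pow_pos hq0 m; positivity
  have hcorner : ∀ i ≤ m, x i * y i ≤ w * h * q ^ m := fun i hi => by
    rw [mul_mul_mul_comm, ← pow_add, Nat.sub_add_cancel hi]
  refine ⟨m + 1, fun _ => 0, fun i => x i, fun _ => 0, fun i => y i, staircase m x y, rfl,
    fun i => ⟨by positivity, by positivity⟩,
    staircase_subset_Icc_prod_Icc (fun i => mul_le_of_le_one_right hw.le (pow_le_one₀ hq0.le hq1))
      (fun i => mul_le_of_le_one_right hh.le (pow_le_one₀ hq0.le hq1)),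
    fun p => Icc_prod_Icc_subset_staircase, (mul_pos hK (by linarith)).trans_le hvol,
    fun a' b' c' d' hab hcd hsub => ?_, ?_⟩
  · refine (area_le_of_Icc_prod_Icc_subset_staircase hcorner hab hcd hsub).trans_lt ?_
    rw [lt_div_iff₀ (by linarith)]
    exact (mul_lt_mul_of_pos_left (by linarith) hK).trans_le hvol
  · calc β / Real.exp (β - 1) * (h * w) - ε
          = ((1 + (β - 1)) * Real.exp (-(β - 1)) - ε / (h * w)) * (h * w) := by
            rw [Real.exp_neg]; field_simp; ring
      _ < q ^ m * (1 + c) * (h * w) := mul_lt_mul_of_pos_right happrox (by positivity)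
      _ = w * h * q ^ m * (1 + c) := by ring
      _ ≤ _ := hvol
end

section
/- Let h, w > 0 and u > 0 with u² ≤ h·w. Then the 2-dimensional Lebesgue measure of the set {(x,y) ∈ [0,w]×[0,h] : x·y ≤ u²} equals u²·(1 + ln(h·w) − ln(u²)). -/
/-! Slicing vertically, the column over `x ∈ (0, w]` is `[0, min h (u² / x)]`, so the area is
`∫₀ʷ min h (u² / x) dx`. Up to `x = u² / h` the integrand is `h`, contributing `u²`; beyond it the
integrand is `u² / x`, contributing `u² log (h w / u²)`. -/

open MeasureTheory Set Real

theorem volume_region_between_cc_eq_lintegral {α : Type*} [MeasurableSpace α] {μ : Measure α}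
    [SFinite μ] {f g : α → ℝ} {s : Set α} (hf : Measurable f) (hg : Measurable g)
    (hs : MeasurableSet s) :
    μ.prod volume {p : α × ℝ | p.1 ∈ s ∧ p.2 ∈ Icc (f p.1) (g p.1)} =
      ∫⁻ x in s, ENNReal.ofReal (g x - f x) ∂μ := by
  rw [Measure.prod_apply (measurableSet_region_between_cc hf hg hs), ← lintegral_indicator hs]
  congr 1 with x
  by_cases hx : x ∈ s
  · simp only [preimage_ofPred_eq, hx, true_and, indicator_of_mem]
    exact Real.volume_Icc
  · simp [hx]

theorem volume_Icc_prod_Icc_mul_le_eq_region_between (w h c : ℝ) :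
    volume {p : ℝ × ℝ | p ∈ Icc 0 w ×ˢ Icc 0 h ∧ p.1 * p.2 ≤ c} =
      volume {p : ℝ × ℝ | p.1 ∈ Ioc 0 w ∧ p.2 ∈ Icc 0 (min h (c / p.1))} := by
  -- The sets differ only in the column `x = 0` (where `c / 0 = 0`), which is null.
  refine (measure_eq_measure_of_null_sdiff ?_
    (measure_mono_null (t := {0} ×ˢ univ) ?_ ?_)).symm
  · rintro ⟨x, y⟩ ⟨⟨hx0, hxw⟩, hy0, hy⟩
    rw [le_min_iff, le_div_iff₀ hx0] at hy
    exact ⟨⟨⟨hx0.le, hxw⟩, hy0, hy.1⟩, by linarith⟩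
  · rintro ⟨x, y⟩ ⟨⟨⟨⟨hx0, hxw⟩, hy0, hyh⟩, hxy⟩, hT⟩
    refine ⟨?_, mem_univ y⟩
    by_contra hx
    have hx0' : 0 < x := lt_of_le_of_ne hx0 (Ne.symm hx)
    refine hT ⟨⟨hx0', hxw⟩, hy0, le_min hyh ?_⟩
    rw [le_div_iff₀ hx0']
    linarith
  · rw [Measure.volume_eq_prod, Measure.prod_prod, Real.volume_singleton, zero_mul]

theorem integrableOn_min_const_div (h : ℝ) {c : ℝ} (hc : 0 ≤ c) (w : ℝ) :
    IntegrableOn (fun x => min h (c / x)) (Ioc 0 w) := by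
  refine Measure.integrableOn_of_bounded (M := |h|) measure_Ioc_lt_top.ne (by fun_prop) ?_
  filter_upwards [ae_restrict_mem measurableSet_Ioc] with x hx
  rw [Real.norm_eq_abs, abs_le]
  exact ⟨le_min (neg_abs_le h) ((neg_nonpos.2 (abs_nonneg h)).trans
    (div_nonneg hc hx.1.le)), (min_le_left _ _).trans (le_abs_self h)⟩

theorem integral_min_const_div {h c w : ℝ} (hh : 0 < h) (hc : 0 < c) (hcw : c ≤ h * w) :
    ∫ x in Ioc 0 w, min h (c / x) = c * (1 + log (h * w) - log c) := by
  have ha : 0 < c / h := div_pos hc hh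
  have haw : c / h ≤ w := (div_le_iff₀' hh).2 hcw
  have hw : 0 < w := ha.trans_le haw
  have hint := integrableOn_min_const_div h hc.le w
  rw [← Ioc_union_Ioc_eq_Ioc ha.le haw, setIntegral_union (Ioc_disjoint_Ioc_of_le le_rfl)
    measurableSet_Ioc (hint.mono_set (Ioc_subset_Ioc_right haw))
    (hint.mono_set (Ioc_subset_Ioc_left ha.le))]
  have h_left : ∫ x in Ioc 0 (c / h), min h (c / x) = c := by
    rw [setIntegral_congr_fun measurableSet_Ioc (g := fun _ => h) fun x hx =>
      min_eq_left ((le_div_iff₀ hx.1).2 ((le_div_iff₀' hh).1 hx.2)), setIntegral_const,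
      Measure.real, Real.volume_Ioc, sub_zero, ENNReal.toReal_ofReal ha.le, smul_eq_mul]
    field_simp
  have h_right : ∫ x in Ioc (c / h) w, min h (c / x) = c * log (w / (c / h)) := by
    have h_eq : EqOn (fun x => min h (c / x)) (fun x => c * x⁻¹) (uIcc (c / h) w) := by
      intro x hx
      rw [uIcc_of_le haw] at hx
      have hx0 : 0 < x := ha.trans_le hx.1
      dsimp only
      rw [min_eq_right ((div_le_iff₀ hx0).2 ((div_le_iff₀' hh).1 hx.1)), div_eq_mul_inv]
    rw [← intervalIntegral.integral_of_le haw, intervalIntegral.integral_congr h_eq,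
      intervalIntegral.integral_const_mul, integral_inv_of_pos ha hw]
  rw [h_left, h_right, log_div hw.ne' ha.ne', log_div hc.ne' hh.ne', log_mul hh.ne' hw.ne']
  ring

theorem stmt6_general (h w u : ℝ) (hh : 0 < h) (hu : 0 < u)
    (huhw : u ^ 2 ≤ h * w) :
    volume {p : ℝ × ℝ | p ∈ Set.Icc (0:ℝ) w ×ˢ Set.Icc (0:ℝ) h ∧ p.1 * p.2 ≤ u ^ 2} =
      ENNReal.ofReal (u ^ 2 * (1 + Real.log (h * w) - Real.log (u ^ 2))) := by
  have hc : 0 < u ^ 2 := by positivity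
  rw [volume_Icc_prod_Icc_mul_le_eq_region_between, Measure.volume_eq_prod,
    volume_region_between_cc_eq_lintegral (f := fun _ => 0) (g := fun x => min h (u ^ 2 / x))
      measurable_const (by fun_prop) measurableSet_Ioc]
  simp only [sub_zero]
  rw [← ofReal_integral_eq_lintegral_ofReal (integrableOn_min_const_div h hc.le w),
    integral_min_const_div hh hc huhw]
  filter_upwards [ae_restrict_mem measurableSet_Ioc] with x hx
  exact le_min hh.le (div_nonneg hc.le hx.1.le)

theorem stmt6 (h w u : ℝ) (hh : 0 < h) (hw : 0 < w) (hu : 0 < u)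
    (huhw : u ^ 2 ≤ h * w) :
    volume {p : ℝ × ℝ | p ∈ Set.Icc (0:ℝ) w ×ˢ Set.Icc (0:ℝ) h ∧ p.1 * p.2 ≤ u ^ 2} =
      ENNReal.ofReal (u ^ 2 * (1 + Real.log (h * w) - Real.log (u ^ 2))) :=
  stmt6_general h w u hh hu huhw
end

section
/- Let s_1,…,s_n be distinct points of the unit square U = [0,1]², ordered so that x(s_j)+y(s_j) ≤ x(s_i)+y(s_i) whenever i < j, and let t_1,…,t_n be the associated tiles. Then for every i: (a) if p ∈ t_i and q satisfies s_i ≼ q ≼ p, then q ∈ t_i; consequently (b) for any axis-aligned rectangle R = [a,b]×[c,d] contained in t_i, the rectangle with lower-left corner s_i and upper-right corner (b,d) is also contained in t_i and has area at least the area of R. -/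
open MeasureTheory

/-- The unit square `[0,1]²` in the plane. -/
def unitSq : Set (ℝ × ℝ) := Set.Icc (0:ℝ) 1 ×ˢ Set.Icc (0:ℝ) 1

/-- `p ≼ q` in the dominance order: `q` dominates `p` coordinatewise. -/
def Dominates (p q : ℝ × ℝ) : Prop := p.1 ≤ q.1 ∧ p.2 ≤ q.2

/-- The tile associated with the point `s i`: all points of the unit square that
dominate `s i` but dominate no earlier point `s j`, `j < i`. -/
def tile {n : ℕ} (s : Fin n → ℝ × ℝ) (i : Fin n) : Set (ℝ × ℝ) :=
  {p | p ∈ unitSq ∧ Dominates (s i) p ∧ ∀ j : Fin n, j < i → ¬ Dominates (s j) p}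

theorem unitSq_eq_Icc : unitSq = Set.Icc 0 1 := Set.Icc_prod_Icc 0 1 0 1

/-- `Dominates` is definitionally the product order `≤` on `ℝ × ℝ`, which lets the
tile conditions be read off `Set.Icc (s i) p` directly. -/
theorem Icc_subset_tile {n : ℕ} {s : Fin n → ℝ × ℝ} {i : Fin n} {p : ℝ × ℝ}
    (hs : s i ∈ unitSq) (hp : p ∈ tile s i) : Set.Icc (s i) p ⊆ tile s i := by
  obtain ⟨hpU, -, hp_new⟩ := hp
  rw [unitSq_eq_Icc] at hs hpU
  intro q ⟨hsq, hqp⟩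
  refine ⟨unitSq_eq_Icc ▸ ⟨hs.1.trans hsq, hqp.trans hpU.2⟩, hsq, fun j hj hjq => ?_⟩
  exact hp_new j hj (le_trans (α := ℝ × ℝ) hjq hqp)

theorem mul_sub_le_mul_sub {α : Type*} [Ring α] [LinearOrder α] [IsStrictOrderedRing α]
    {a a' b c c' d : α} (ha : a' ≤ a) (hab : a ≤ b) (hc : c' ≤ c) (hcd : c ≤ d) :
    (b - a) * (d - c) ≤ (b - a') * (d - c') :=
  mul_le_mul (sub_le_sub_left ha b) (sub_le_sub_left hc d) (sub_nonneg.2 hcd)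
    (sub_nonneg.2 (ha.trans hab))

theorem stmt9_general (n : ℕ) (s : Fin n → ℝ × ℝ)
    (hU : ∀ i, s i ∈ unitSq) :
    ∀ i : Fin n,
      (∀ p q : ℝ × ℝ, p ∈ tile s i → Dominates (s i) q → Dominates q p →
        q ∈ tile s i) ∧
      (∀ a b c d : ℝ, a ≤ b → c ≤ d → Set.Icc a b ×ˢ Set.Icc c d ⊆ tile s i →
        (Set.Icc (s i).1 b ×ˢ Set.Icc (s i).2 d ⊆ tile s i ∧
         (b - a) * (d - c) ≤ (b - (s i).1) * (d - (s i).2))) := by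
  intro i
  refine ⟨fun p q hp hsq hqp => Icc_subset_tile (hU i) hp ⟨hsq, hqp⟩,
    fun a b c d hab hcd hR => ?_⟩
  have hac : (a, c) ∈ tile s i := hR ⟨⟨le_rfl, hab⟩, ⟨le_rfl, hcd⟩⟩
  have hbd : (b, d) ∈ tile s i := hR ⟨⟨hab, le_rfl⟩, ⟨hcd, le_rfl⟩⟩
  obtain ⟨-, ⟨hsa, hsc⟩, -⟩ := hac
  refine ⟨?_, mul_sub_le_mul_sub hsa hab hsc hcd⟩
  rw [Set.Icc_prod_Icc]
  exact Icc_subset_tile (hU i) hbd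

theorem stmt9 (n : ℕ) (s : Fin n → ℝ × ℝ)
    (hinj : Function.Injective s) (hU : ∀ i, s i ∈ unitSq)
    (horder : ∀ i j : Fin n, i < j → (s j).1 + (s j).2 ≤ (s i).1 + (s i).2) :
    ∀ i : Fin n,
      (∀ p q : ℝ × ℝ, p ∈ tile s i → Dominates (s i) q → Dominates q p →
        q ∈ tile s i) ∧
      (∀ a b c d : ℝ, a ≤ b → c ≤ d → Set.Icc a b ×ˢ Set.Icc c d ⊆ tile s i →
        (Set.Icc (s i).1 b ×ˢ Set.Icc (s i).2 d ⊆ tile s i ∧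
         (b - a) * (d - c) ≤ (b - (s i).1) * (d - (s i).2))) :=
  stmt9_general n s hU
end

section
/- Let s_1,…,s_n be distinct points of the unit square U = [0,1]², ordered so that x(s_j)+y(s_j) ≤ x(s_i)+y(s_i) whenever i < j, and let t_1,…,t_n be the associated tiles. Fix i and write s_i = (x_i, y_i). Let W_i = sup{x : (x, y_i) ∈ t_i} and H_i = sup{y : (x_i, y) ∈ t_i}. Then no point s_j (for any j) lies in the open triangle Δ_i = {(x,y) : x < W_i, y < y_i, x + y > x_i + y_i}, and no point s_j lies in the open triangle Γ_i = {(x,y) : y < H_i, x < x_i, x + y > x_i + y_i}. -/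
open MeasureTheory

/-!
A point `s j` of `Δ_i` or `Γ_i` has a larger coordinate sum than `s i`, so it comes earlier in the
order, `j < i`. Lying below the row of `s i` (resp. left of its column), it is dominated by every
point of `a_i` to its right (resp. of `b_i` above it); since no point of `t_i` dominates an earlier
`s j`, the side `a_i` ends before `x_j` (resp. `b_i` ends below `y_j`), i.e. `W_i ≤ x_j` (resp.
`H_i ≤ y_j`). As `sSup ∅ = 0` in Lean, this also needs `0 ≤ x_j` (resp. `0 ≤ y_j`).
-/

section Tile

variable {n : ℕ} {s : Fin n → ℝ × ℝ} {i j : Fin n}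

theorem sSup_row_tile_le (hji : j < i) (hy : (s j).2 ≤ (s i).2) (hx : 0 ≤ (s j).1) :
    sSup {x : ℝ | (x, (s i).2) ∈ tile s i} ≤ (s j).1 :=
  Real.sSup_le (fun _ hp => le_of_not_gt fun hlt => hp.2.2 j hji ⟨hlt.le, hy⟩) hx

theorem sSup_column_tile_le (hji : j < i) (hx : (s j).1 ≤ (s i).1) (hy : 0 ≤ (s j).2) :
    sSup {y : ℝ | ((s i).1, y) ∈ tile s i} ≤ (s j).2 :=
  Real.sSup_le (fun _ hp => le_of_not_gt fun hlt => hp.2.2 j hji ⟨hx, hlt.le⟩) hy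

end Tile

theorem stmt10_general (n : ℕ) (s : Fin n → ℝ × ℝ)
    (hU : ∀ i, s i ∈ unitSq)
    (horder : ∀ i j : Fin n, i < j → (s j).1 + (s j).2 ≤ (s i).1 + (s i).2)
    (i : Fin n) :
    ∀ j : Fin n,
      ¬((s j).1 < sSup {x : ℝ | (x, (s i).2) ∈ tile s i} ∧ (s j).2 < (s i).2 ∧
          (s i).1 + (s i).2 < (s j).1 + (s j).2) ∧
      ¬((s j).2 < sSup {y : ℝ | ((s i).1, y) ∈ tile s i} ∧ (s j).1 < (s i).1 ∧
          (s i).1 + (s i).2 < (s j).1 + (s j).2) := by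
  have earlier : ∀ j, (s i).1 + (s i).2 < (s j).1 + (s j).2 → j < i :=
    fun _ => (antitone_iff_forall_lt.mpr horder).reflect_lt
  intro j
  constructor
  · rintro ⟨hW, hy, hsum⟩
    exact hW.not_ge (sSup_row_tile_le (earlier j hsum) hy.le (hU j).1.1)
  · rintro ⟨hH, hx, hsum⟩
    exact hH.not_ge (sSup_column_tile_le (earlier j hsum) hx.le (hU j).2.1)

theorem stmt10 (n : ℕ) (s : Fin n → ℝ × ℝ)
    (hinj : Function.Injective s) (hU : ∀ i, s i ∈ unitSq)
    (horder : ∀ i j : Fin n, i < j → (s j).1 + (s j).2 ≤ (s i).1 + (s i).2)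
    (i : Fin n) :
    ∀ j : Fin n,
      ¬((s j).1 < sSup {x : ℝ | (x, (s i).2) ∈ tile s i} ∧ (s j).2 < (s i).2 ∧
          (s i).1 + (s i).2 < (s j).1 + (s j).2) ∧
      ¬((s j).2 < sSup {y : ℝ | ((s i).1, y) ∈ tile s i} ∧ (s j).1 < (s i).1 ∧
          (s i).1 + (s i).2 < (s j).1 + (s j).2) :=
  stmt10_general n s hU horder i
end

section
/- Let S be a finite set of points in the unit square U = [0,1]², and let (r_s)_{s∈S} be a family of axis-aligned rectangles contained in U, each r_s anchored at s, with pairwise disjoint interiors, that is Pareto optimal: for every s ∈ S, r_s has maximal area among all axis-aligned rectangles contained in U, anchored at s, and interior-disjoint from r_{s'} for all s' ≠ s. Then there is an enumeration s_1,…,s_n of S such that for every i, the rectangle r_{s_i} has maximal area among all axis-aligned rectangles contained in U, anchored at s_i, and interior-disjoint from r_{s_1},…,r_{s_{i−1}}. -/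
open MeasureTheory

/-- The axis-aligned rectangle with lower-left corner `s` and upper-right corner `q`. -/
def rectA (s q : ℝ × ℝ) : Set (ℝ × ℝ) := Set.Icc s.1 q.1 ×ˢ Set.Icc s.2 q.2

lemma interior_rectA (s t : ℝ × ℝ) :
    interior (rectA s t) = Set.Ioo s.1 t.1 ×ˢ Set.Ioo s.2 t.2 := by
  rw [rectA, interior_prod_eq, interior_Icc, interior_Icc]

lemma disj_arith {a1 x1 b1 y1 a2 x2 b2 y2 : ℝ}
    (h1 : a1 < x1) (h2 : b1 < y1) (h3 : a2 < x2) (h4 : b2 < y2)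
    (hd : Disjoint (Set.Ioo a1 x1 ×ˢ Set.Ioo b1 y1) (Set.Ioo a2 x2 ×ˢ Set.Ioo b2 y2)) :
    x1 ≤ a2 ∨ x2 ≤ a1 ∨ y1 ≤ b2 ∨ y2 ≤ b1 := by
  by_contra hcon
  push_neg at hcon
  obtain ⟨g1, g2, g3, g4⟩ := hcon
  have hx : max a1 a2 < min x1 x2 := max_lt (lt_min h1 g2) (lt_min g1 h3)
  have hy : max b1 b2 < min y1 y2 := max_lt (lt_min h2 g4) (lt_min g3 h4)
  have hu1 : a1 < (max a1 a2 + min x1 x2)/2 := lt_of_le_of_lt (le_max_left a1 a2) (by linarith)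
  have hu2 : (max a1 a2 + min x1 x2)/2 < x1 := lt_of_lt_of_le (by linarith) (min_le_left x1 x2)
  have hu3 : a2 < (max a1 a2 + min x1 x2)/2 := lt_of_le_of_lt (le_max_right a1 a2) (by linarith)
  have hu4 : (max a1 a2 + min x1 x2)/2 < x2 := lt_of_lt_of_le (by linarith) (min_le_right x1 x2)
  have hv1 : b1 < (max b1 b2 + min y1 y2)/2 := lt_of_le_of_lt (le_max_left b1 b2) (by linarith)
  have hv2 : (max b1 b2 + min y1 y2)/2 < y1 := lt_of_lt_of_le (by linarith) (min_le_left y1 y2)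
  have hv3 : b2 < (max b1 b2 + min y1 y2)/2 := lt_of_le_of_lt (le_max_right b1 b2) (by linarith)
  have hv4 : (max b1 b2 + min y1 y2)/2 < y2 := lt_of_lt_of_le (by linarith) (min_le_right y1 y2)
  exact absurd hd (Set.not_disjoint_iff.mpr
    ⟨((max a1 a2 + min x1 x2)/2, (max b1 b2 + min y1 y2)/2),
      ⟨⟨hu1, hu2⟩, hv1, hv2⟩, ⟨hu3, hu4⟩, hv3, hv4⟩)

lemma mod_ne_succ {k : ℕ} (hk : 2 ≤ k) (i : ℕ) : i % k ≠ (i + 1) % k := by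
  intro h
  have h1 : k ∣ (i + 1) - i := (Nat.modEq_iff_dvd' (Nat.le_succ i)).mp h
  have h2 : (i + 1) - i = 1 := by omega
  rw [h2] at h1
  have := Nat.le_of_dvd one_pos h1
  omega

lemma mod_cancel {k : ℕ} (c r1 r2 : ℕ) (h1 : r1 < k) (h2 : r2 < k)
    (h : (c + r1) % k = (c + r2) % k) : r1 = r2 := by
  have h3 := Nat.ModEq.add_left_cancel' c h
  rwa [Nat.ModEq, Nat.mod_eq_of_lt h1, Nat.mod_eq_of_lt h2] at h3

/-- The key geometric lemma: there is no cyclic sequence of nondegenerate, pairwise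
interior-disjoint axis-parallel rectangles in which each rectangle's upper-right corner
strictly dominates the next rectangle's lower-left corner. -/
lemma quadrant (k : ℕ) : 2 ≤ k → ∀ a b x y : ℕ → ℝ,
    (∀ j, a (j + k) = a j) → (∀ j, b (j + k) = b j) →
    (∀ j, x (j + k) = x j) → (∀ j, y (j + k) = y j) →
    (∀ j, a j < x j) → (∀ j, b j < y j) →
    (∀ j, a (j + 1) < x j) → (∀ j, b (j + 1) < y j) →
    (∀ j1 j2, j1 % k ≠ j2 % k →
      x j1 ≤ a j2 ∨ x j2 ≤ a j1 ∨ y j1 ≤ b j2 ∨ y j2 ≤ b j1) →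
    False := by
  induction k using Nat.strong_induction_on with
  | _ k IH =>
  intro hk a b x y pa pb px py nda ndb da db dis
  have hcons : ∀ i : ℕ, i % k ≠ (i + 1) % k := mod_ne_succ hk
  have hLD : ∀ i, x (i + 1) ≤ a i ∨ y (i + 1) ≤ b i := by
    intro i
    rcases dis i (i + 1) (hcons i) with h | h | h | h
    · exact absurd h (not_le.mpr (da i))
    · exact Or.inl h
    · exact absurd h (not_le.mpr (db i))
    · exact Or.inr h
  have noAll : ∀ f : ℕ → ℝ, (∀ j, f (j + k) = f j) → (∀ i, f (i + 1) < f i) → False := by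
    intro f pf hf
    have hs : StrictAnti f := strictAnti_nat_of_succ_lt hf
    have h0 : f k < f 0 := hs (by omega)
    have h1 : f (0 + k) = f 0 := pf 0
    rw [zero_add] at h1
    linarith
  rcases eq_or_lt_of_le hk with hk2 | hk3
  · -- k = 2
    subst hk2
    rcases hLD 0 with h | h
    · have h2 := da 1
      have h3 : a (0 + 2) = a 0 := pa 0
      norm_num at h2 h3 h
      linarith
    · have h2 := db 1
      have h3 : b (0 + 2) = b 0 := pb 0
      norm_num at h2 h3 h
      linarith
  · -- 3 ≤ k
    by_cases hrem : ∃ i, a (i + 2) < x i ∧ b (i + 2) < y i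
    · -- a vertex can be removed: apply induction hypothesis with cycle length k-1
      obtain ⟨i, hr1, hr2⟩ := hrem
      have hm2 : 2 ≤ k - 1 := by omega
      have hmk : k - 1 < k := by omega
      apply IH (k - 1) hmk hm2 (fun j => a (i + 2 + j % (k-1))) (fun j => b (i + 2 + j % (k-1)))
        (fun j => x (i + 2 + j % (k-1))) (fun j => y (i + 2 + j % (k-1)))
      · intro j; simp [Nat.add_mod_right]
      · intro j; simp [Nat.add_mod_right]
      · intro j; simp [Nat.add_mod_right]
      · intro j; simp [Nat.add_mod_right]
      · intro j; exact nda _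
      · intro j; exact ndb _
      · -- dominance for a/x
        intro j
        by_cases hc : j % (k-1) + 1 < k - 1
        · have h1 : (j + 1) % (k-1) = j % (k-1) + 1 := by
            rw [Nat.add_mod, Nat.mod_eq_of_lt (show 1 < k - 1 by omega), Nat.mod_eq_of_lt hc]
          rw [h1, show i + 2 + (j % (k-1) + 1) = (i + 2 + j % (k-1)) + 1 by omega]
          exact da _
        · have hlt : j % (k-1) < k - 1 := Nat.mod_lt _ (by omega)
          have hc2 : j % (k-1) + 1 = k - 1 := by omega
          have h1 : (j + 1) % (k-1) = 0 := by
            rw [Nat.add_mod, Nat.mod_eq_of_lt (show 1 < k - 1 by omega), hc2, Nat.mod_self]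
          rw [h1, show i + 2 + j % (k-1) = i + k by omega, px i]
          simpa using hr1
      · -- dominance for b/y
        intro j
        by_cases hc : j % (k-1) + 1 < k - 1
        · have h1 : (j + 1) % (k-1) = j % (k-1) + 1 := by
            rw [Nat.add_mod, Nat.mod_eq_of_lt (show 1 < k - 1 by omega), Nat.mod_eq_of_lt hc]
          rw [h1, show i + 2 + (j % (k-1) + 1) = (i + 2 + j % (k-1)) + 1 by omega]
          exact db _
        · have hlt : j % (k-1) < k - 1 := Nat.mod_lt _ (by omega)
          have hc2 : j % (k-1) + 1 = k - 1 := by omega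
          have h1 : (j + 1) % (k-1) = 0 := by
            rw [Nat.add_mod, Nat.mod_eq_of_lt (show 1 < k - 1 by omega), hc2, Nat.mod_self]
          rw [h1, show i + 2 + j % (k-1) = i + k by omega, py i]
          simpa using hr2
      · -- disjointness
        intro j1 j2 hne
        apply dis
        intro heq
        exact hne (mod_cancel (k := k) (i + 2) _ _
          (by have := Nat.mod_lt j1 (show 0 < k - 1 by omega); omega)
          (by have := Nat.mod_lt j2 (show 0 < k - 1 by omega); omega) heq)
    · -- no vertex removable
      push_neg at hrem
      have hNR : ∀ i, x i ≤ a (i + 2) ∨ y i ≤ b (i + 2) := by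
        intro i
        rcases le_or_gt (x i) (a (i + 2)) with h | h
        · exact Or.inl h
        · exact Or.inr (hrem i h)
      by_cases hallL : ∀ i, x (i + 1) ≤ a i
      · exact noAll x px (fun i => lt_of_le_of_lt (hallL i) (nda i))
      · push_neg at hallL
        obtain ⟨i1, hi1⟩ := hallL
        by_cases hstep : ∀ i, x (i + 1) ≤ a i → x (i + 2) ≤ a (i + 1)
        · -- then no index is of type L at all, so all are D, contradiction
          have perX : ∀ t j, x (j + t * k) = x j := by
            intro t
            induction t with
            | zero => intro j; simp
            | succ t iht => intro j; rw [show j + (t+1) * k = (j + t * k) + k by ring, px, iht]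
          have perA : ∀ t j, a (j + t * k) = a j := by
            intro t
            induction t with
            | zero => intro j; simp
            | succ t iht => intro j; rw [show j + (t+1) * k = (j + t * k) + k by ring, pa, iht]
          have hnoL : ∀ i, ¬ x (i + 1) ≤ a i := by
            intro i hL
            have hprop : ∀ j, i ≤ j → x (j + 1) ≤ a j := by
              intro j hj
              induction j, hj using Nat.le_induction with
              | base => exact hL
              | succ j hj ih =>
                have h6 := hstep j ih
                rw [show j + 1 + 1 = j + 2 by omega]
                exact h6
            have hle : i ≤ i1 + (i + 1) * k := by
              calc i ≤ i + 1 := Nat.le_succ i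
              _ ≤ (i + 1) * k := Nat.le_mul_of_pos_right (i+1) (by omega)
              _ ≤ i1 + (i + 1) * k := Nat.le_add_left _ _
            have h7 := hprop (i1 + (i + 1) * k) hle
            rw [show i1 + (i + 1) * k + 1 = (i1 + 1) + (i + 1) * k by omega] at h7
            rw [perX (i+1) (i1 + 1), perA (i+1) i1] at h7
            linarith
          have hallD : ∀ i, y (i + 1) ≤ b i := fun i => (hLD i).resolve_left (hnoL i)
          exact noAll y py (fun i => lt_of_le_of_lt (hallD i) (ndb i))
        · -- there is an L step followed by a D step: local contradiction
          push_neg at hstep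
          obtain ⟨i, hLi, hi2⟩ := hstep
          have hD1 : y (i + 2) ≤ b (i + 1) := by
            have := hLD (i + 1)
            rw [show i + 1 + 1 = i + 2 by omega] at this
            exact this.resolve_left (not_le.mpr hi2)
          have h5 : b (i + 2) < y i := by
            have hh1 := ndb (i + 2)
            have hh2 := db i
            linarith
          have h6 : x i ≤ a (i + 2) := (hNR i).resolve_right (not_le.mpr h5)
          have h7 : a (i + 2) < x (i + 1) := by
            have := da (i + 1)
            rw [show i + 1 + 1 = i + 2 by omega] at this
            exact this
          have h8 := nda i
          linarith

/-- In every Pareto-optimal family there is an element whose rectangle is not a binding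
constraint for any other element. -/
lemma exists_nonbinder (q : (ℝ × ℝ) → ℝ × ℝ) (S : Finset (ℝ × ℝ)) (hne : S.Nonempty)
    (hdisj : ∀ s ∈ S, ∀ s' ∈ S, s ≠ s' →
      Disjoint (interior (rectA s (q s))) (interior (rectA s' (q s'))))
    (hpareto : ∀ s ∈ S, ∀ p : ℝ × ℝ, s.1 ≤ p.1 → s.2 ≤ p.2 → rectA s p ⊆ unitSq →
      (∀ s' ∈ S, s' ≠ s →
        Disjoint (interior (rectA s p)) (interior (rectA s' (q s')))) →
      (p.1 - s.1) * (p.2 - s.2) ≤ ((q s).1 - s.1) * ((q s).2 - s.2)) :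
    ∃ sstar ∈ S, ∀ t ∈ S, t ≠ sstar → ∀ p : ℝ × ℝ,
      t.1 ≤ p.1 → t.2 ≤ p.2 → rectA t p ⊆ unitSq →
      (∀ s' ∈ S, s' ≠ t → s' ≠ sstar →
        Disjoint (interior (rectA t p)) (interior (rectA s' (q s')))) →
      (p.1 - t.1) * (p.2 - t.2) ≤ ((q t).1 - t.1) * ((q t).2 - t.2) := by
  classical
  by_contra hno
  push_neg at hno
  have key : ∀ s : {u : ℝ × ℝ // u ∈ S}, ∃ t : {u : ℝ × ℝ // u ∈ S},
      (t : ℝ × ℝ) ≠ (s : ℝ × ℝ) ∧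
      ((t : ℝ × ℝ).1 < (q (s : ℝ × ℝ)).1 ∧ (t : ℝ × ℝ).2 < (q (s : ℝ × ℝ)).2) ∧
      ((s : ℝ × ℝ).1 < (q (s : ℝ × ℝ)).1 ∧ (s : ℝ × ℝ).2 < (q (s : ℝ × ℝ)).2) := by
    rintro ⟨s, hs⟩
    obtain ⟨t, htS, htne, p, hp1, hp2, hp3, hp4, hp5⟩ := hno s hs
    have hndis : ¬ Disjoint (interior (rectA t p)) (interior (rectA s (q s))) := by
      intro hdisj2
      refine absurd (hpareto t htS p hp1 hp2 hp3 ?_) (not_le.mpr hp5)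
      intro s' hs' hne'
      by_cases h : s' = s
      · subst h; exact hdisj2
      · exact hp4 s' hs' hne' h
    obtain ⟨z, hz1, hz2⟩ := Set.not_disjoint_iff.mp hndis
    rw [interior_rectA] at hz1 hz2
    obtain ⟨⟨hz1a, hz1b⟩, hz1c, hz1d⟩ := hz1
    obtain ⟨⟨hz2a, hz2b⟩, hz2c, hz2d⟩ := hz2
    exact ⟨⟨t, htS⟩, htne,
      ⟨lt_trans hz1a hz2b, lt_trans hz1c hz2d⟩,
      ⟨lt_trans hz2a hz2b, lt_trans hz2c hz2d⟩⟩
  choose g hg1 hg2 hg3 using key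
  obtain ⟨u0, hu0⟩ := hne
  have build : ∀ m n' : ℕ, m < n' →
      g^[m] (⟨u0, hu0⟩ : {u : ℝ × ℝ // u ∈ S}) = g^[n'] ⟨u0, hu0⟩ → False := by
    intro m n' hlt heqq
    set v0 : {u : ℝ × ℝ // u ∈ S} := ⟨u0, hu0⟩ with hv0
    set v := g^[m] v0 with hv
    have hper : g^[n' - m] v = v := by
      have h1 : g^[(n' - m) + m] v0 = g^[n' - m] (g^[m] v0) := Function.iterate_add_apply g _ _ _
      rw [show (n' - m) + m = n' by omega] at h1
      rw [hv, ← h1, ← heqq]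
    have hpp : Function.IsPeriodicPt g (n' - m) v := hper
    set k := Function.minimalPeriod g v with hkdef
    have hkpos : 0 < k := hpp.minimalPeriod_pos (by omega)
    have hk : g^[k] v = v := Function.iterate_minimalPeriod
    have hk2 : 2 ≤ k := by
      rcases Nat.lt_or_ge k 2 with h | h
      · exfalso
        have hk1 : k = 1 := by omega
        rw [hk1, Function.iterate_one] at hk
        exact hg1 v (congrArg Subtype.val hk)
      · exact h
    have hiter_mod : ∀ j, g^[j] v = g^[j % k] v := by
      intro j
      conv_lhs => rw [← Nat.mod_add_div j k]
      generalize j / k = t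
      induction t with
      | zero => simp
      | succ t iht =>
        rw [Nat.mul_succ, ← Nat.add_assoc, Function.iterate_add_apply, hk]
        exact iht
    have hdistinct : ∀ j1 j2 : ℕ, j1 % k ≠ j2 % k → g^[j1] v ≠ g^[j2] v := by
      have haux : ∀ r1 r2 : ℕ, r1 < r2 → r2 < k → g^[r1] v ≠ g^[r2] v := by
        intro r1 r2 h12 h2k heq2
        have h3 : g^[(k - r2) + r2] v = g^[(k - r2) + r1] v := by
          rw [Function.iterate_add_apply, Function.iterate_add_apply, heq2]
        rw [show k - r2 + r2 = k by omega, hk] at h3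
        have hpp2 : Function.IsPeriodicPt g (k - r2 + r1) v := h3.symm
        have hle := hpp2.minimalPeriod_le (by omega)
        rw [← hkdef] at hle
        omega
      intro j1 j2 hne12 heq12
      rw [hiter_mod j1, hiter_mod j2] at heq12
      rcases lt_or_gt_of_ne hne12 with h | h
      · exact haux _ _ h (Nat.mod_lt _ (by omega)) heq12
      · exact haux _ _ h (Nat.mod_lt _ (by omega)) heq12.symm
    have hcyc : ∀ j : ℕ, g^[j + k] v = g^[j] v := by
      intro j; rw [Function.iterate_add_apply, hk]
    refine quadrant k hk2
      (fun j => ((g^[j] v : {u : ℝ × ℝ // u ∈ S}) : ℝ × ℝ).1)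
      (fun j => ((g^[j] v : {u : ℝ × ℝ // u ∈ S}) : ℝ × ℝ).2)
      (fun j => (q ((g^[j] v : {u : ℝ × ℝ // u ∈ S}) : ℝ × ℝ)).1)
      (fun j => (q ((g^[j] v : {u : ℝ × ℝ // u ∈ S}) : ℝ × ℝ)).2)
      (fun j => congrArg (fun w : {u : ℝ × ℝ // u ∈ S} => (w : ℝ × ℝ).1) (hcyc j))
      (fun j => congrArg (fun w : {u : ℝ × ℝ // u ∈ S} => (w : ℝ × ℝ).2) (hcyc j))
      (fun j => congrArg (fun w : {u : ℝ × ℝ // u ∈ S} => (q (w : ℝ × ℝ)).1) (hcyc j))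
      (fun j => congrArg (fun w : {u : ℝ × ℝ // u ∈ S} => (q (w : ℝ × ℝ)).2) (hcyc j))
      (fun j => (hg3 (g^[j] v)).1)
      (fun j => (hg3 (g^[j] v)).2)
      ?_ ?_ ?_
    · intro j
      have h := (hg2 (g^[j] v)).1
      rw [← Function.iterate_succ_apply' g j v] at h
      exact h
    · intro j
      have h := (hg2 (g^[j] v)).2
      rw [← Function.iterate_succ_apply' g j v] at h
      exact h
    · intro j1 j2 hnej
      have hvne : ((g^[j1] v : {u : ℝ × ℝ // u ∈ S}) : ℝ × ℝ) ≠ ((g^[j2] v : {u : ℝ × ℝ // u ∈ S}) : ℝ × ℝ) :=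
        fun hh => hdistinct j1 j2 hnej (Subtype.ext hh)
      have hd := hdisj _ (g^[j1] v).2 _ (g^[j2] v).2 hvne
      rw [interior_rectA, interior_rectA] at hd
      exact disj_arith (hg3 _).1 (hg3 _).2 (hg3 _).1 (hg3 _).2 hd
  obtain ⟨m, n', hmn, heq⟩ :=
    Finite.exists_ne_map_eq_of_infinite (fun n : ℕ => g^[n] (⟨u0, hu0⟩ : {u : ℝ × ℝ // u ∈ S}))
  rcases lt_or_gt_of_ne hmn with h | h
  · exact build m n' h heq
  · exact build n' m h heq.symm

lemma greedy_aux (q : (ℝ × ℝ) → ℝ × ℝ) :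
    ∀ n : ℕ, ∀ S : Finset (ℝ × ℝ),
      S.card = n →
      (∀ p ∈ S, p ∈ unitSq) →
      (∀ s ∈ S, s.1 ≤ (q s).1 ∧ s.2 ≤ (q s).2) →
      (∀ s ∈ S, rectA s (q s) ⊆ unitSq) →
      (∀ s ∈ S, ∀ s' ∈ S, s ≠ s' →
        Disjoint (interior (rectA s (q s))) (interior (rectA s' (q s')))) →
      (∀ s ∈ S, ∀ p : ℝ × ℝ, s.1 ≤ p.1 → s.2 ≤ p.2 → rectA s p ⊆ unitSq →
        (∀ s' ∈ S, s' ≠ s →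
          Disjoint (interior (rectA s p)) (interior (rectA s' (q s')))) →
        (p.1 - s.1) * (p.2 - s.2) ≤ ((q s).1 - s.1) * ((q s).2 - s.2)) →
      ∃ e : Fin n → ℝ × ℝ, Function.Injective e ∧ (∀ i, e i ∈ S) ∧
        ∀ i : Fin n, ∀ p : ℝ × ℝ,
          (e i).1 ≤ p.1 → (e i).2 ≤ p.2 → rectA (e i) p ⊆ unitSq →
          (∀ j, j < i →
            Disjoint (interior (rectA (e i) p)) (interior (rectA (e j) (q (e j))))) →
          (p.1 - (e i).1) * (p.2 - (e i).2) ≤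
            ((q (e i)).1 - (e i).1) * ((q (e i)).2 - (e i).2) := by
  intro n
  induction n with
  | zero =>
    intro S _ _ _ _ _ _
    exact ⟨Fin.elim0, fun i => i.elim0, fun i => i.elim0, fun i => i.elim0⟩
  | succ n ih =>
    intro S hcard hS hanch hsub hdisj hpar
    classical
    have hne : S.Nonempty := Finset.card_pos.mp (by omega)
    obtain ⟨sstar, hsmem, hsnb⟩ := exists_nonbinder q S hne hdisj hpar
    have hcard' : (S.erase sstar).card = n := by
      rw [Finset.card_erase_of_mem hsmem, hcard]
      omega
    obtain ⟨e', he'inj, he'mem, he'g⟩ := ih (S.erase sstar) hcard'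
      (fun p hp => hS p (Finset.mem_of_mem_erase hp))
      (fun s hs => hanch s (Finset.mem_of_mem_erase hs))
      (fun s hs => hsub s (Finset.mem_of_mem_erase hs))
      (fun s hs s' hs' hss =>
        hdisj s (Finset.mem_of_mem_erase hs) s' (Finset.mem_of_mem_erase hs') hss)
      (fun t ht p h1 h2 h3 h4 =>
        hsnb t (Finset.mem_of_mem_erase ht) (Finset.ne_of_mem_erase ht) p h1 h2 h3
          (fun s' hs' hn1 hn2 => h4 s' (Finset.mem_erase.mpr ⟨hn2, hs'⟩) hn1))
    let e : Fin (n+1) → ℝ × ℝ := fun i => if h : (i : ℕ) < n then e' ⟨i, h⟩ else sstar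
    have he_pos : ∀ (i : Fin (n+1)) (h : (i : ℕ) < n), e i = e' ⟨i, h⟩ := fun i h => dif_pos h
    have he_neg : ∀ i : Fin (n+1), ¬ (i : ℕ) < n → e i = sstar := fun i h => dif_neg h
    refine ⟨e, ?_, ?_, ?_⟩
    · -- injective
      intro i j hij
      by_cases hi : (i : ℕ) < n <;> by_cases hj : (j : ℕ) < n
      · rw [he_pos i hi, he_pos j hj] at hij
        have h2 := he'inj hij
        have h3 := congrArg Fin.val h2
        exact Fin.ext h3
      · rw [he_pos i hi, he_neg j hj] at hij
        exact absurd (hij ▸ he'mem ⟨i, hi⟩) (Finset.notMem_erase _ _)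
      · rw [he_neg i hi, he_pos j hj] at hij
        exact absurd (hij ▸ he'mem ⟨j, hj⟩) (Finset.notMem_erase _ _)
      · have h2 : (i : ℕ) = n := by have := i.isLt; omega
        have h3 : (j : ℕ) = n := by have := j.isLt; omega
        exact Fin.ext (by omega)
    · -- membership
      intro i
      by_cases hi : (i : ℕ) < n
      · rw [he_pos i hi]; exact Finset.mem_of_mem_erase (he'mem _)
      · rw [he_neg i hi]; exact hsmem
    · -- greedy
      intro i p hp1 hp2 hp3 hp4
      by_cases hi : (i : ℕ) < n
      · rw [he_pos i hi] at hp1 hp2 hp3 ⊢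
        refine he'g ⟨i, hi⟩ p hp1 hp2 hp3 ?_
        intro j' hj'
        have hj'n : (j' : ℕ) < n := j'.isLt
        have h5 := hp4 ⟨(j' : ℕ), by omega⟩ (by
          show ((j' : ℕ)) < (i : ℕ)
          exact hj')
        rw [he_pos i hi, he_pos ⟨(j' : ℕ), by omega⟩ hj'n] at h5
        have hfix : (⟨(j' : ℕ), hj'n⟩ : Fin n) = j' := Fin.ext rfl
        rw [hfix] at h5
        exact h5
      · have hin : (i : ℕ) = n := by have := i.isLt; omega
        rw [he_neg i hi] at hp1 hp2 hp3 ⊢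
        refine hpar sstar hsmem p hp1 hp2 hp3 ?_
        intro s' hs' hne'
        have hs'mem : s' ∈ S.erase sstar := Finset.mem_erase.mpr ⟨hne', hs'⟩
        have hsurj : ∃ j' : Fin n, e' j' = s' := by
          have himg : Finset.image e' Finset.univ = S.erase sstar := by
            apply Finset.eq_of_subset_of_card_le
            · intro u hu
              obtain ⟨j', _, hj'⟩ := Finset.mem_image.mp hu
              exact hj' ▸ he'mem j'
            · rw [Finset.card_image_of_injective _ he'inj, Finset.card_univ, Fintype.card_fin]
              exact le_of_eq hcard'
          obtain ⟨j', _, hj'⟩ := Finset.mem_image.mp (himg ▸ hs'mem)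
          exact ⟨j', hj'⟩
        obtain ⟨j', hj'⟩ := hsurj
        have h5 := hp4 ⟨(j' : ℕ), by omega⟩ (by
          show ((j' : ℕ)) < (i : ℕ)
          rw [hin]; exact j'.isLt)
        rw [he_neg i hi, he_pos ⟨(j' : ℕ), by omega⟩ j'.isLt] at h5
        have hfix : (⟨(j' : ℕ), j'.isLt⟩ : Fin n) = j' := Fin.ext rfl
        rw [hfix, hj'] at h5
        exact h5

theorem stmt13 (S : Finset (ℝ × ℝ)) (hS : ∀ p ∈ S, p ∈ unitSq)
    (q : (ℝ × ℝ) → ℝ × ℝ)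
    (hanch : ∀ s ∈ S, s.1 ≤ (q s).1 ∧ s.2 ≤ (q s).2)
    (hsub : ∀ s ∈ S, rectA s (q s) ⊆ unitSq)
    (hdisj : ∀ s ∈ S, ∀ s' ∈ S, s ≠ s' →
      Disjoint (interior (rectA s (q s))) (interior (rectA s' (q s'))))
    (hpareto : ∀ s ∈ S, ∀ p : ℝ × ℝ, s.1 ≤ p.1 → s.2 ≤ p.2 → rectA s p ⊆ unitSq →
      (∀ s' ∈ S, s' ≠ s →
        Disjoint (interior (rectA s p)) (interior (rectA s' (q s')))) →
      (p.1 - s.1) * (p.2 - s.2) ≤ ((q s).1 - s.1) * ((q s).2 - s.2)) :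
    ∃ e : Fin S.card → ℝ × ℝ,
      Function.Injective e ∧ (∀ i, e i ∈ S) ∧
      ∀ i : Fin S.card, ∀ p : ℝ × ℝ,
        (e i).1 ≤ p.1 → (e i).2 ≤ p.2 → rectA (e i) p ⊆ unitSq →
        (∀ j, j < i →
          Disjoint (interior (rectA (e i) p)) (interior (rectA (e j) (q (e j))))) →
        (p.1 - (e i).1) * (p.2 - (e i).2) ≤
          ((q (e i)).1 - (e i).1) * ((q (e i)).2 - (e i).2) := by
  exact greedy_aux q S.card S rfl hS hanch hsub hdisj hpareto
end

section
/- Let n ≥ 1 and let σ be a permutation of {0,1,…,n−1}. For each i, let R_i = [i, n] × [σ(i), σ(i)+1]. Then each R_i is contained in [0,n]², has lower-left corner (i, σ(i)), the interiors of R_0,…,R_{n−1} are pairwise disjoint, and the total area of the R_i equals n(n+1)/2; in particular the rectangles cover a fraction (n+1)/(2n) ≥ 1/2 of the square [0,n]². -/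
open MeasureTheory

/-- The rectangle `[i, n] × [σ(i), σ(i)+1]` anchored at the permutation point `(i, σ(i))`. -/
def permRect (n : ℕ) (σ : Equiv.Perm (Fin n)) (i : Fin n) : Set (ℝ × ℝ) :=
  Set.Icc ((i : ℕ) : ℝ) (n : ℝ) ×ˢ Set.Icc ((σ i : ℕ) : ℝ) (((σ i : ℕ) : ℝ) + 1)

theorem stmt14 (n : ℕ) (hn : 1 ≤ n) (σ : Equiv.Perm (Fin n)) :
    (∀ i : Fin n, permRect n σ i ⊆ Set.Icc (0:ℝ) n ×ˢ Set.Icc (0:ℝ) n) ∧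
    (∀ i : Fin n, ((i : ℕ) : ℝ) ≤ (n : ℝ) ∧
      ((σ i : ℕ) : ℝ) ≤ ((σ i : ℕ) : ℝ) + 1) ∧
    (∀ i j : Fin n, i ≠ j →
      Disjoint (interior (permRect n σ i)) (interior (permRect n σ j))) ∧
    (∑ i : Fin n, (volume (permRect n σ i)).toReal = (n : ℝ) * (n + 1) / 2) ∧
    (1 / 2 ≤ ((n : ℝ) * (n + 1) / 2) / ((n : ℝ) * n)) := by
  have hle : ∀ i : Fin n, ((i : ℕ) : ℝ) ≤ (n : ℝ) := fun i =>
    Nat.cast_le.mpr i.isLt.le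
  refine ⟨?_, fun i => ⟨hle i, by linarith⟩, ?_, ?_, ?_⟩
  · intro i
    apply Set.prod_mono
    · exact Set.Icc_subset_Icc (by positivity) le_rfl
    · refine Set.Icc_subset_Icc (by positivity) ?_
      have : (σ i : ℕ) + 1 ≤ n := (σ i).isLt
      calc ((σ i : ℕ) : ℝ) + 1 = (((σ i : ℕ) + 1 : ℕ) : ℝ) := by push_cast; ring
        _ ≤ n := Nat.cast_le.mpr this
  · intro i j hij
    have hσ : (σ i : ℕ) ≠ (σ j : ℕ) := fun h =>
      hij (σ.injective (Fin.ext h))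
    rw [permRect, permRect, interior_prod_eq, interior_prod_eq, interior_Icc,
      interior_Icc, interior_Icc, interior_Icc]
    rw [Set.disjoint_left]
    rintro ⟨x, y⟩ ⟨-, hy1⟩ ⟨-, hy2⟩
    simp only [Set.mem_Ioo] at hy1 hy2
    rcases lt_or_gt_of_ne hσ with h | h
    · have : ((σ i : ℕ) : ℝ) + 1 ≤ ((σ j : ℕ) : ℝ) := by
        have := Nat.cast_le (α := ℝ).mpr h
        push_cast at this ⊢; linarith
      linarith [hy1.2, hy2.1]
    · have : ((σ j : ℕ) : ℝ) + 1 ≤ ((σ i : ℕ) : ℝ) := by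
        have := Nat.cast_le (α := ℝ).mpr h
        push_cast at this ⊢; linarith
      linarith [hy1.1, hy2.2]
  · have hvol : ∀ i : Fin n, (volume (permRect n σ i)).toReal = (n : ℝ) - i := by
      intro i
      rw [permRect, Measure.volume_eq_prod, Measure.prod_prod, Real.volume_Icc, Real.volume_Icc]
      rw [show ((σ i : ℕ) : ℝ) + 1 - ((σ i : ℕ) : ℝ) = 1 by ring, ENNReal.ofReal_one, mul_one,
        ENNReal.toReal_ofReal (by linarith [hle i])]
    simp only [hvol]
    rw [Finset.sum_sub_distrib, Finset.sum_const, Finset.card_univ, Fintype.card_fin]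
    rw [Fin.sum_univ_eq_sum_range (fun i => (i : ℝ)) n]
    have h2 : ((∑ i ∈ Finset.range n, i : ℕ) : ℝ) * 2 = (n : ℝ) * ((n : ℝ) - 1) := by
      have h3 := congrArg (Nat.cast (R := ℝ)) (Finset.sum_range_id_mul_two n)
      push_cast [Nat.cast_sub hn] at h3
      push_cast
      linarith
    rw [nsmul_eq_mul, ← Nat.cast_sum]
    linarith
  · have hn' : (0:ℝ) < n := by exact_mod_cast hn
    rw [le_div_iff₀ (by positivity)]
    nlinarith
end

section
/- Let n ≥ 1 and let S = {(k/n, k/n) : k = 0,1,…,n−1} ⊆ [0,1]². Let (r_k)_{k=0}^{n−1} be axis-aligned rectangles contained in [0,1]² such that r_k is anchored at (k/n, k/n), the interiors of the rectangles are pairwise disjoint, and the interior of no rectangle contains a point of S. Then the total area of the rectangles is at most 1/2 + 1/(2n). -/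
open MeasureTheory

/-- The `k`-th equally spaced diagonal point `(k/n, k/n)`. -/
noncomputable def diagPt (n : ℕ) (k : Fin n) : ℝ × ℝ :=
  (((k : ℕ) : ℝ) / n, ((k : ℕ) : ℝ) / n)

/-!
The rectangle anchored at `(k/n, k/n)` may not contain the next diagonal point `((k+1)/n, (k+1)/n)`
in its interior, so one of its sides is at most `1/n`; the other side is at most `1 - k/n` since the
rectangle lies in the unit square. Summing the resulting bounds `(1/n)(1 - k/n)` over `k` gives
exactly `1/2 + 1/(2n)`.
-/

open Finset

theorem mem_interior_rectA {s q p : ℝ × ℝ} :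
    p ∈ interior (rectA s q) ↔ (s.1 < p.1 ∧ p.1 < q.1) ∧ s.2 < p.2 ∧ p.2 < q.2 := by
  rw [rectA, interior_prod_eq, interior_Icc, interior_Icc, Set.mem_prod, Set.mem_Ioo, Set.mem_Ioo]

theorem le_one_of_rectA_subset_unitSq {s q : ℝ × ℝ} (hsq : s.1 ≤ q.1 ∧ s.2 ≤ q.2)
    (hsub : rectA s q ⊆ unitSq) : q.1 ≤ 1 ∧ q.2 ≤ 1 := by
  have hq : q ∈ unitSq := hsub ⟨⟨hsq.1, le_rfl⟩, hsq.2, le_rfl⟩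
  exact ⟨hq.1.2, hq.2.2⟩

/-- The hypothesis on `(a + δ, a + δ)` is conditional so that it also covers the last rectangle,
whose next diagonal point would lie outside the unit square. -/
theorem area_le_of_diag_not_mem_interior {a δ : ℝ} {q : ℝ × ℝ} (hδ : 0 < δ)
    (haq : a ≤ q.1 ∧ a ≤ q.2) (hq : q.1 ≤ 1 ∧ q.2 ≤ 1)
    (hnot : a + δ < 1 → (a + δ, a + δ) ∉ interior (rectA (a, a) q)) :
    (q.1 - a) * (q.2 - a) ≤ δ * (1 - a) := by
  have hside : q.1 ≤ a + δ ∨ q.2 ≤ a + δ := by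
    by_contra! h
    have hlt : a + δ < 1 := h.1.trans_le hq.1
    exact hnot hlt (mem_interior_rectA.2 ⟨⟨by linarith, h.1⟩, by linarith, h.2⟩)
  rcases hside with h | h
  · nlinarith
  · nlinarith

theorem sum_range_strip_area {n : ℕ} (hn : 1 ≤ n) :
    ∑ k ∈ range n, 1 / (n : ℝ) * (1 - k / n) = 1 / 2 + 1 / (2 * n) := by
  have hgauss (m : ℕ) : ∑ k ∈ range m, (k : ℝ) = m * (m - 1) / 2 := by
    induction m with
    | zero => simp
    | succ m ih =>
      rw [sum_range_succ, ih]
      push_cast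
      ring
  have hn0 : (n : ℝ) ≠ 0 := by positivity
  simp_rw [mul_sub, sum_sub_distrib, ← mul_sum, ← sum_div, hgauss]
  simp only [sum_const, card_range, nsmul_eq_mul, mul_one]
  field_simp
  ring

theorem stmt15_general (n : ℕ) (hn : 1 ≤ n) (q : Fin n → ℝ × ℝ)
    (hanch : ∀ k : Fin n, (diagPt n k).1 ≤ (q k).1 ∧ (diagPt n k).2 ≤ (q k).2)
    (hsub : ∀ k : Fin n, rectA (diagPt n k) (q k) ⊆ unitSq)
    (hempty : ∀ k l : Fin n, diagPt n l ∉ interior (rectA (diagPt n k) (q k))) :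
    ∑ k : Fin n, ((q k).1 - (diagPt n k).1) * ((q k).2 - (diagPt n k).2) ≤
      1 / 2 + 1 / (2 * n) := by
  have hn0 : (0 : ℝ) < n := by exact_mod_cast hn
  have hstrip (k : Fin n) :
      ((q k).1 - (diagPt n k).1) * ((q k).2 - (diagPt n k).2) ≤ 1 / n * (1 - (k : ℕ) / n) := by
    refine area_le_of_diag_not_mem_interior (by positivity) (hanch k)
      (le_one_of_rectA_subset_unitSq (hanch k) (hsub k)) fun hlt => ?_
    have hnext : (k : ℕ) + 1 < n := by
      have hlt' : ((k : ℕ) + 1 : ℝ) / n < 1 := by simpa [diagPt, add_div] using hlt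
      rw [div_lt_one hn0] at hlt'
      exact_mod_cast hlt'
    simpa [diagPt, add_div] using hempty k ⟨(k : ℕ) + 1, hnext⟩
  calc _ ≤ ∑ k : Fin n, 1 / (n : ℝ) * (1 - (k : ℕ) / n) := sum_le_sum fun k _ => hstrip k
    _ = ∑ k ∈ range n, 1 / (n : ℝ) * (1 - k / n) :=
      Fin.sum_univ_eq_sum_range (fun k : ℕ => 1 / (n : ℝ) * (1 - k / n)) n
    _ = 1 / 2 + 1 / (2 * n) := sum_range_strip_area hn

theorem stmt15 (n : ℕ) (hn : 1 ≤ n) (q : Fin n → ℝ × ℝ)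
    (hanch : ∀ k : Fin n, (diagPt n k).1 ≤ (q k).1 ∧ (diagPt n k).2 ≤ (q k).2)
    (hsub : ∀ k : Fin n, rectA (diagPt n k) (q k) ⊆ unitSq)
    (hdisj : ∀ k l : Fin n, k ≠ l →
      Disjoint (interior (rectA (diagPt n k) (q k)))
        (interior (rectA (diagPt n l) (q l))))
    (hempty : ∀ k l : Fin n, diagPt n l ∉ interior (rectA (diagPt n k) (q k))) :
    ∑ k : Fin n, ((q k).1 - (diagPt n k).1) * ((q k).2 - (diagPt n k).2) ≤
      1 / 2 + 1 / (2 * n) :=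
  stmt15_general n hn q hanch hsub hempty
end
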